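/- If b ∈ ℝ^d is a constant vector and H_δ(x) = B_δ(x) (full spherical influence region), then for every v ∈ S_δ(Ω) (i.e., v ∈ L²(Ω_δ), v = 0 on Ω_{I_δ}, finite nonlocal energy), the nonlocal convection term vanishes: ∫_Ω (b · G_δ v)(x) v(x) dx = 0. -/

import Mathlib

/-!
Pairing with `b` turns the convection term into
`∫_Ω ∫_{Ωδ} v(x) (v(y) - v(x)) K(y - x) dy dx` with the odd kernel `K(s) = γ(|s|) b·s/|s|`;
the inner integral may be taken over all of `Ωδ` because `γ` vanishes beyond `δ` and the
sphere of radius `δ` is null. The part with `v(x)²` vanishes since `K(· - x)` integrates to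
zero over `B_δ(x)` by oddness, and the part with `v(x) v(y)` vanishes since its integrand is
antisymmetric under `x ↔ y` on `Ωδ × Ωδ`.
-/

open MeasureTheory
open scoped RealInnerProductSpace

/-- The nonlocal gradient `G_δ v (x) = ∫_{B_δ(x)} [(y-x)/|y-x|] γ(|y-x|)(v(y)-v(x)) dy`
(full-ball influence region). -/
noncomputable def nonlocalGradBall (d : ℕ) (δ : ℝ) (γ : ℝ → ℝ)
    (v : EuclideanSpace ℝ (Fin d) → ℝ) (x : EuclideanSpace ℝ (Fin d)) :
    EuclideanSpace ℝ (Fin d) :=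
  ∫ y in Metric.ball x δ, ((v y - v x) * γ (dist y x) / ‖y - x‖) • (y - x)

open Metric

/-- `⟪b, nonlocalGradBall d δ γ v x⟫ =`
`∫ y in ball x δ, (v y - v x) * convectionKernel γ b (y - x)`. -/
noncomputable def convectionKernel {E : Type*} [NormedAddCommGroup E] [InnerProductSpace ℝ E]
    (γ : ℝ → ℝ) (b s : E) : ℝ :=
  γ ‖s‖ * ⟪b, s⟫ / ‖s‖

theorem aestronglyMeasurable_div_norm {E : Type*} [NormedAddCommGroup E] [MeasurableSpace E]
    [OpensMeasurableSpace E] {μ : Measure E} {γ : ℝ → ℝ}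
    (hγ : AEStronglyMeasurable (fun s : E => γ ‖s‖ * ‖s‖) μ) :
    AEStronglyMeasurable (fun s : E => γ ‖s‖ / ‖s‖) μ := by
  -- `γ r / r = γ r * r / r ^ 2`, also at `r = 0`
  refine (hγ.mul (measurable_norm.pow_const 2).inv.aestronglyMeasurable).congr
    (ae_of_all _ fun s => ?_)
  simp only [Pi.mul_apply, Pi.inv_apply]
  rcases eq_or_ne ‖s‖ 0 with hs | hs
  · simp [hs]
  · field_simp

theorem norm_div_norm_smul_le {E : Type*} [NormedAddCommGroup E] [NormedSpace ℝ E] (a : ℝ)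
    (s : E) : ‖(a / ‖s‖) • s‖ ≤ |a| := by
  rw [norm_smul, norm_div, norm_norm, Real.norm_eq_abs]
  rcases eq_or_ne ‖s‖ 0 with hs | hs
  · simp [hs]
  · rw [div_mul_cancel₀ _ hs]

section Kernel

variable {E : Type*} [NormedAddCommGroup E] [InnerProductSpace ℝ E] {γ : ℝ → ℝ} {b : E}

theorem convectionKernel_neg (s : E) :
    convectionKernel γ b (-s) = -convectionKernel γ b s := by
  simp only [convectionKernel, norm_neg, inner_neg_right]
  ring

theorem convectionKernel_eq_zero_of_lt {δ : ℝ} (hγ : ∀ r, δ < r → γ r = 0) {s : E}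
    (hs : δ < ‖s‖) : convectionKernel γ b s = 0 := by
  simp [convectionKernel, hγ _ hs]

theorem abs_convectionKernel_le (hγ : ∀ r, 0 ≤ γ r) (s : E) :
    |convectionKernel γ b s| ≤ ‖b‖ * γ ‖s‖ := by
  rw [convectionKernel, abs_div, abs_mul, abs_of_nonneg (hγ _), abs_norm]
  rcases eq_or_ne ‖s‖ 0 with hs | hs
  · simp only [hs, div_zero]
    exact mul_nonneg (norm_nonneg _) (hγ _)
  · rw [div_le_iff₀ (lt_of_le_of_ne (norm_nonneg _) hs.symm)]
    calc γ ‖s‖ * |⟪b, s⟫| ≤ γ ‖s‖ * (‖b‖ * ‖s‖) := by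
          gcongr
          · exact hγ _
          · exact abs_real_inner_le_norm _ _
      _ = ‖b‖ * γ ‖s‖ * ‖s‖ := by ring

theorem abs_mul_mul_convectionKernel_le (hγ : ∀ r, 0 ≤ γ r) {p q w : ℝ} (hp : |p| ≤ w)
    (hq : |q| ≤ w) (s : E) :
    |p * q * convectionKernel γ b s| ≤ ‖b‖ * (γ ‖s‖ * w * w) := by
  have hw : 0 ≤ w := (abs_nonneg p).trans hp
  rw [abs_mul, abs_mul]
  calc |p| * |q| * |convectionKernel γ b s| ≤ w * w * (‖b‖ * γ ‖s‖) := by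
        gcongr
        exact abs_convectionKernel_le hγ s
    _ = ‖b‖ * (γ ‖s‖ * w * w) := by ring

variable [MeasurableSpace E] [OpensMeasurableSpace E] {μ : Measure E}

theorem aestronglyMeasurable_convectionKernel
    (hγ : AEStronglyMeasurable (fun s : E => γ ‖s‖ * ‖s‖) μ) :
    AEStronglyMeasurable (convectionKernel γ b) μ :=
  (((continuous_const (y := b)).inner continuous_id).aestronglyMeasurable.mul
    (aestronglyMeasurable_div_norm hγ)).congr
    (ae_of_all _ fun s => by simp only [Pi.mul_apply, convectionKernel, id]; ring)

end Kernel

theorem integral_prod_eq_zero_of_antisymm {α : Type*} [MeasurableSpace α] (μ : Measure α)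
    [SFinite μ] {f : α × α → ℝ} (hf : ∀ p, f p.swap = -f p) :
    ∫ p, f p ∂μ.prod μ = 0 := by
  have h := integral_prod_swap (μ := μ) (ν := μ) f
  simp only [hf, integral_neg] at h
  linarith

theorem integral_eq_zero_of_odd {G : Type*} [MeasurableSpace G] [AddGroup G] [MeasurableNeg G]
    (μ : Measure G) [μ.IsNegInvariant] {f : G → ℝ} (hf : ∀ x, f (-x) = -f x) :
    ∫ x, f x ∂μ = 0 := by
  have h := integral_neg_eq_self f μ
  simp only [hf, integral_neg] at h
  linarith

theorem setIntegral_eq_setIntegral_ball {X : Type*} [PseudoMetricSpace X] [MeasurableSpace X]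
    {μ : Measure X} {x : X} {r : ℝ} (hsph : μ (sphere x r) = 0) {s : Set X}
    (hs : NullMeasurableSet s μ) (hbs : ball x r ⊆ s) {f : X → ℝ}
    (hf : ∀ y, r < dist y x → f y = 0) :
    ∫ y in s, f y ∂μ = ∫ y in ball x r, f y ∂μ := by
  refine setIntegral_eq_of_subset_of_ae_sdiff_eq_zero hs hbs ?_
  filter_upwards [measure_eq_zero_iff_ae_notMem.mp hsph] with y hy hys
  refine hf y (lt_of_le_of_ne ?_ (Ne.symm hy))
  simpa using hys.2

section Haar

variable {E : Type*} [NormedAddCommGroup E] [InnerProductSpace ℝ E] [FiniteDimensional ℝ E]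
  [MeasurableSpace E] [BorelSpace E] (μ : Measure E) [μ.IsAddHaarMeasure]

theorem measure_sphere_eq_zero_of_ne_zero (x : E) {r : ℝ} (hr : r ≠ 0) :
    μ (sphere x r) = 0 := by
  rcases subsingleton_or_nontrivial E with hE | hE
  · simp [sphere_eq_empty_of_subsingleton hr]
  · exact Measure.addHaar_sphere μ x r

theorem setIntegral_convectionKernel_sub_eq_zero {γ : ℝ → ℝ} {δ : ℝ} (hδ : δ ≠ 0)
    (hγ : ∀ r, δ < r → γ r = 0) (b : E) {s : Set E} (hs : NullMeasurableSet s μ) {x : E}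
    (hbs : ball x δ ⊆ s) :
    ∫ y in s, convectionKernel γ b (y - x) ∂μ = 0 := by
  have hsupp : ∀ y, δ < dist y x → convectionKernel γ b (y - x) = 0 := fun y hy =>
    convectionKernel_eq_zero_of_lt hγ (by rwa [← dist_eq_norm])
  have hsph := measure_sphere_eq_zero_of_ne_zero μ x hδ
  rw [setIntegral_eq_setIntegral_ball hsph hs hbs hsupp,
    ← setIntegral_eq_setIntegral_ball hsph nullMeasurableSet_univ (Set.subset_univ _) hsupp,
    setIntegral_univ, integral_sub_right_eq_self (convectionKernel γ b) x]
  exact integral_eq_zero_of_odd μ convectionKernel_neg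

theorem integrable_mul_mul_convectionKernel_sub {γ : ℝ → ℝ} (hγ0 : ∀ r, 0 ≤ γ r)
    (hγmeas : AEStronglyMeasurable (fun s : E => γ ‖s‖ * ‖s‖) μ) {v : E → ℝ}
    (hv : Measurable v) (b : E) {t : Set E}
    (hQ : Integrable
      (fun p : E × E => γ (dist p.1 p.2) * (|v p.1| + |v p.2|) * (|v p.1| + |v p.2|))
      ((μ.restrict t).prod (μ.restrict t))) :
    Integrable (fun p : E × E => v p.1 * v p.2 * convectionKernel γ b (p.2 - p.1))
      ((μ.restrict t).prod (μ.restrict t)) := by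
  have hK :
      AEStronglyMeasurable (fun p : E × E => convectionKernel γ b (p.2 - p.1)) (μ.prod μ) :=
    ((aestronglyMeasurable_convectionKernel hγmeas).comp_quasiMeasurePreserving
      (quasiMeasurePreserving_sub_of_right_invariant μ μ)).comp_quasiMeasurePreserving
      Measure.measurePreserving_swap.quasiMeasurePreserving
  have hle : (μ.restrict t).prod (μ.restrict t) ≤ μ.prod μ := by
    rw [Measure.prod_restrict]
    exact Measure.restrict_le_self
  refine (hQ.const_mul ‖b‖).mono'
    (((hv.comp measurable_fst).mul (hv.comp measurable_snd)).aestronglyMeasurable.mul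
      (hK.mono_measure hle)) (ae_of_all _ fun p => ?_)
  simpa only [Real.norm_eq_abs, ← dist_eq_norm, dist_comm p.2 p.1] using
    abs_mul_mul_convectionKernel_le hγ0 (le_add_of_nonneg_right (abs_nonneg (v p.2)))
      (le_add_of_nonneg_left (abs_nonneg (v p.1))) (p.2 - p.1)

end Haar

section NonlocalGradient

variable {d : ℕ} {δ : ℝ} {γ : ℝ → ℝ} {v : EuclideanSpace ℝ (Fin d) → ℝ}

theorem integrableOn_smul_nonlocalGradBall_integrand (hγ0 : ∀ r, 0 ≤ γ r)
    (hγmeas : AEStronglyMeasurable (fun s : EuclideanSpace ℝ (Fin d) => γ ‖s‖ * ‖s‖))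
    (hv : Measurable v) {s : Set (EuclideanSpace ℝ (Fin d))} {x : EuclideanSpace ℝ (Fin d)}
    (hQ : IntegrableOn (fun y => γ (dist x y) * (|v x| + |v y|) * (|v x| + |v y|)) s) :
    IntegrableOn (fun y => v x • ((v y - v x) * γ (dist y x) / ‖y - x‖) • (y - x)) s := by
  have hρ : AEStronglyMeasurable (fun y => γ ‖y - x‖ / ‖y - x‖) :=
    (aestronglyMeasurable_div_norm hγmeas).comp_quasiMeasurePreserving
      (measurePreserving_sub_right volume x).quasiMeasurePreserving
  have hcoef : AEStronglyMeasurable (fun y => (v y - v x) * γ (dist y x) / ‖y - x‖) :=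
    ((hv.sub (measurable_const (a := v x))).aestronglyMeasurable.mul hρ).congr
      (ae_of_all _ fun y => by
        simp only [Pi.mul_apply, Pi.sub_apply, dist_eq_norm, mul_div_assoc])
  have hmeas : AEStronglyMeasurable
      (fun y => v x • ((v y - v x) * γ (dist y x) / ‖y - x‖) • (y - x)) :=
    (hcoef.smul (continuous_sub_right x).aestronglyMeasurable).const_smul (v x)
  refine hQ.mono' hmeas.restrict (ae_of_all _ fun y => ?_)
  calc ‖v x • ((v y - v x) * γ (dist y x) / ‖y - x‖) • (y - x)‖
      ≤ |v x| * (|v y - v x| * γ (dist x y)) := by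
        rw [norm_smul, Real.norm_eq_abs, dist_comm]
        gcongr
        simpa [abs_mul, abs_of_nonneg (hγ0 _)] using
          norm_div_norm_smul_le ((v y - v x) * γ (dist x y)) (y - x)
    _ ≤ (|v x| + |v y|) * ((|v x| + |v y|) * γ (dist x y)) :=
        mul_le_mul (le_add_of_nonneg_right (abs_nonneg _))
          (mul_le_mul_of_nonneg_right ((abs_sub _ _).trans_eq (add_comm _ _)) (hγ0 _))
          (mul_nonneg (abs_nonneg _) (hγ0 _)) (by positivity)
    _ = γ (dist x y) * (|v x| + |v y|) * (|v x| + |v y|) := by ring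

theorem inner_nonlocalGradBall_mul_self_eq (hδ : δ ≠ 0) (hγ0 : ∀ r, 0 ≤ γ r)
    (hγsupp : ∀ r, δ < r → γ r = 0)
    (hγmeas : AEStronglyMeasurable (fun s : EuclideanSpace ℝ (Fin d) => γ ‖s‖ * ‖s‖))
    (hv : Measurable v) (b : EuclideanSpace ℝ (Fin d)) {s : Set (EuclideanSpace ℝ (Fin d))}
    (hs : MeasurableSet s) {x : EuclideanSpace ℝ (Fin d)} (hbs : ball x δ ⊆ s)
    (hQ : IntegrableOn (fun y => γ (dist x y) * (|v x| + |v y|) * (|v x| + |v y|)) s) :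
    ⟪b, nonlocalGradBall d δ γ v x⟫ * v x
      = ∫ y in s, v x * v y * convectionKernel γ b (y - x) := by
  set w : EuclideanSpace ℝ (Fin d) → ℝ := fun y => |v x| + |v y|
  have hvx : ∀ y, |v x| ≤ w y := fun y => le_add_of_nonneg_right (abs_nonneg _)
  have hvy : ∀ y, |v y| ≤ w y := fun y => le_add_of_nonneg_left (abs_nonneg _)
  have hγx : ∀ y, γ (dist x y) = γ ‖y - x‖ := fun y => by rw [dist_comm, dist_eq_norm]
  have hK : AEStronglyMeasurable (fun y => convectionKernel γ b (y - x)) :=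
    (aestronglyMeasurable_convectionKernel hγmeas).comp_quasiMeasurePreserving
      (measurePreserving_sub_right volume x).quasiMeasurePreserving
  have hint_scalar : ∀ p q : EuclideanSpace ℝ (Fin d) → ℝ, Measurable p → Measurable q →
      (∀ y, |p y| ≤ w y) → (∀ y, |q y| ≤ w y) →
      IntegrableOn (fun y => p y * q y * convectionKernel γ b (y - x)) s := by
    intro p q hp hq hpw hqw
    refine (hQ.const_mul ‖b‖).mono' ((hp.mul hq).aestronglyMeasurable.mul hK).restrict
      (ae_of_all _ fun y => ?_)
    simpa only [Real.norm_eq_abs, hγx, mul_assoc] using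
      abs_mul_mul_convectionKernel_le hγ0 (hpw y) (hqw y) (y - x)
  have hint_vec := (integrableOn_smul_nonlocalGradBall_integrand hγ0 hγmeas hv hQ).mono_set hbs
  have hinner : ∀ y, ⟪b, v x • ((v y - v x) * γ (dist y x) / ‖y - x‖) • (y - x)⟫
      = v x * v y * convectionKernel γ b (y - x) - v x * v x * convectionKernel γ b (y - x) := by
    intro y
    simp only [real_inner_smul_right, convectionKernel, dist_eq_norm]
    ring
  have hsupp : ∀ y, δ < dist y x → v x * v y * convectionKernel γ b (y - x)
      - v x * v x * convectionKernel γ b (y - x) = 0 := fun y hy => by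
    rw [convectionKernel_eq_zero_of_lt hγsupp (by rwa [← dist_eq_norm])]
    ring
  calc ⟪b, nonlocalGradBall d δ γ v x⟫ * v x
      = ∫ y in ball x δ,
          ⟪b, v x • ((v y - v x) * γ (dist y x) / ‖y - x‖) • (y - x)⟫ := by
        rw [integral_inner hint_vec, integral_smul, real_inner_smul_right, mul_comm,
          nonlocalGradBall]
    _ = ∫ y in s, (v x * v y * convectionKernel γ b (y - x)
          - v x * v x * convectionKernel γ b (y - x)) := by
        simp only [hinner]
        exact (setIntegral_eq_setIntegral_ball (measure_sphere_eq_zero_of_ne_zero volume x hδ)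
          hs.nullMeasurableSet hbs hsupp).symm
    _ = ∫ y in s, v x * v y * convectionKernel γ b (y - x) := by
        rw [integral_sub (hint_scalar _ _ measurable_const hv hvx hvy)
          (hint_scalar _ _ measurable_const measurable_const hvx hvx), integral_const_mul,
          setIntegral_convectionKernel_sub_eq_zero volume hδ hγsupp b hs.nullMeasurableSet hbs,
          mul_zero, sub_zero]

end NonlocalGradient

theorem stmt6_general {d : ℕ} {δ : ℝ} (hδ : 0 < δ)
    (Ω Ωδ : Set (EuclideanSpace ℝ (Fin d)))
    (hΩmeas : MeasurableSet Ω) (hΩδmeas : MeasurableSet Ωδ)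
    (hsub : Ω ⊆ Ωδ)
    (hball : ∀ x ∈ Ω, Metric.ball x δ ⊆ Ωδ)
    (bconst : EuclideanSpace ℝ (Fin d))
    (γ : ℝ → ℝ) (hγ0 : ∀ r, 0 ≤ γ r) (hγsupp : ∀ r, δ < r → γ r = 0)
    (hmom : Integrable (fun s : EuclideanSpace ℝ (Fin d) => γ ‖s‖ * ‖s‖))
    (v : EuclideanSpace ℝ (Fin d) → ℝ) (hvmeas : Measurable v)
    (hv : ∀ x ∈ Ωδ \ Ω, v x = 0)
    (hint : IntegrableOn
      (fun p : EuclideanSpace ℝ (Fin d) × EuclideanSpace ℝ (Fin d) =>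
        γ (dist p.1 p.2) * (|v p.1| + |v p.2|) * (|v p.1| + |v p.2|)) (Ωδ ×ˢ Ωδ)) :
    ∫ x in Ω, ⟪bconst, nonlocalGradBall d δ γ v x⟫ * v x = 0 := by
  set ν := volume.restrict Ωδ
  set F := fun p : EuclideanSpace ℝ (Fin d) × EuclideanSpace ℝ (Fin d) =>
    v p.1 * v p.2 * convectionKernel γ bconst (p.2 - p.1)
  rw [IntegrableOn, Measure.volume_eq_prod, ← Measure.prod_restrict] at hint
  have hF : Integrable F (ν.prod ν) :=
    integrable_mul_mul_convectionKernel_sub volume hγ0 hmom.aestronglyMeasurable hvmeas bconst hint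
  have hpointwise : ∀ᵐ x ∂volume.restrict Ω,
      ⟪bconst, nonlocalGradBall d δ γ v x⟫ * v x = ∫ y in Ωδ, F (x, y) := by
    filter_upwards [ae_restrict_mem hΩmeas,
      ae_restrict_of_ae_restrict_of_subset hsub hint.prod_right_ae] with x hx hQx
    exact inner_nonlocalGradBall_mul_self_eq hδ.ne' hγ0 hγsupp hmom.aestronglyMeasurable hvmeas
      bconst hΩδmeas (hball x hx) hQx
  calc ∫ x in Ω, ⟪bconst, nonlocalGradBall d δ γ v x⟫ * v x
      = ∫ x in Ω, ∫ y in Ωδ, F (x, y) := integral_congr_ae hpointwise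
    _ = ∫ x in Ωδ, ∫ y in Ωδ, F (x, y) :=
        (setIntegral_eq_of_subset_of_forall_sdiff_eq_zero hΩδmeas hsub fun x hx => by
          simp [F, hv x hx]).symm
    _ = ∫ p, F p ∂ν.prod ν := (integral_prod F hF).symm
    _ = 0 := integral_prod_eq_zero_of_antisymm ν fun p => by
        simp only [F, Prod.fst_swap, Prod.snd_swap, ← neg_sub p.2 p.1, convectionKernel_neg]
        ring

/-- for a constant velocity `b` and full spherical influence region, the
nonlocal convection term vanishes: `∫_Ω (b · G_δ v) v = 0` for every `v` in the
nonlocal energy space. -/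
theorem stmt6 {d : ℕ} {δ : ℝ} (hδ : 0 < δ)
    (Ω Ωδ : Set (EuclideanSpace ℝ (Fin d)))
    (hΩmeas : MeasurableSet Ω) (hΩδmeas : MeasurableSet Ωδ)
    (hΩopen : IsOpen Ω) (hΩbdd : Bornology.IsBounded Ω) (hsub : Ω ⊆ Ωδ)
    (hball : ∀ x ∈ Ω, Metric.ball x δ ⊆ Ωδ)
    (bconst : EuclideanSpace ℝ (Fin d))
    (γ : ℝ → ℝ) (hγ0 : ∀ r, 0 ≤ γ r) (hγsupp : ∀ r, δ < r → γ r = 0)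
    (hmom : Integrable (fun s : EuclideanSpace ℝ (Fin d) => γ ‖s‖ * ‖s‖))
    (v : EuclideanSpace ℝ (Fin d) → ℝ) (hvmeas : Measurable v)
    (hv : ∀ x ∈ Ωδ \ Ω, v x = 0)
    (hvL2 : IntegrableOn (fun x => v x ^ 2) Ωδ)
    (hint : IntegrableOn
      (fun p : EuclideanSpace ℝ (Fin d) × EuclideanSpace ℝ (Fin d) =>
        γ (dist p.1 p.2) * (|v p.1| + |v p.2|) * (|v p.1| + |v p.2|)) (Ωδ ×ˢ Ωδ)) :
    ∫ x in Ω, ⟪bconst, nonlocalGradBall d δ γ v x⟫ * v x = 0 :=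
  stmt6_general hδ Ω Ωδ hΩmeas hΩδmeas hsub hball bconst γ hγ0 hγsupp hmom v hvmeas hv hint
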